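/- For every z ∈ ℍ, let N be the 3×3 complex matrix whose first row is (−i/z², i/z, −i), whose second row is (1/z̄², −1/z̄, 1) (z̄ denoting the complex conjugate of z), and whose third row is (2·Im(z)/|z|², π − 2·arg(z), 2·Im(z)) (real numbers regarded as complex numbers), where arg denotes the principal argument, taking values in (0, π) on ℍ. Then (1/(2π)) · det N = (4·Im(z)/(π·|z|⁴)) · (Im(z) + Re(z)·(π/2 − arg(z))), as an equality of complex numbers (the right-hand side being real). -/

import Mathlib

/-!
With `u = z⁻¹` and `w = (conj z)⁻¹`, the first two rows are `-i • (u², -u, 1)` and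
`(w², -w, 1)`. Expanding along the third row `(a, b, c)` gives the Vandermonde-like factorisation
`-i (w - u) (a + b (u + w) + c u w)`, and `w - u = 2 i Im z / |z|²`, `u + w = 2 Re z / |z|²`,
`u w = 1 / |z|²`.
-/

open ComplexConjugate

theorem Matrix.det_fin_three_quadratic_rows {R : Type*} [CommRing R] (s u w a b c : R) :
    !![s * u ^ 2, -(s * u), s; w ^ 2, -w, 1; a, b, c].det =
      s * (w - u) * (a + b * (u + w) + c * (u * w)) := by
  rw [Matrix.det_fin_three]
  simp only [Matrix.of_apply, Matrix.cons_val', Matrix.cons_val_zero, Matrix.cons_val_one,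
    Matrix.cons_val_two, Matrix.empty_val', Matrix.cons_val_fin_one, Matrix.head_cons,
    Matrix.tail_cons, Matrix.head_fin_const]
  ring

namespace Complex

theorem inv_conj_eq_mul_inv_normSq (z : ℂ) : (conj z)⁻¹ = z * ((normSq z)⁻¹ : ℝ) := by
  rw [inv_def, conj_conj, normSq_conj]

theorem inv_conj_sub_inv (z : ℂ) :
    (conj z)⁻¹ - z⁻¹ = (2 * z.im : ℝ) * I * ((normSq z)⁻¹ : ℝ) := by
  rw [inv_conj_eq_mul_inv_normSq, inv_def, ← sub_mul, sub_conj]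

theorem inv_add_inv_conj (z : ℂ) :
    z⁻¹ + (conj z)⁻¹ = (2 * z.re : ℝ) * ((normSq z)⁻¹ : ℝ) := by
  rw [inv_conj_eq_mul_inv_normSq, inv_def, ← add_mul, add_comm, add_conj]

theorem inv_mul_inv_conj (z : ℂ) : z⁻¹ * (conj z)⁻¹ = ((normSq z)⁻¹ : ℝ) := by
  rw [← mul_inv, mul_conj, ofReal_inv]

end Complex

open Complex in
theorem det_q_density (z : ℂ) :
    ((1 / (2 * Real.pi) : ℝ) : ℂ) * Matrix.det
      !![-Complex.I / z ^ 2, Complex.I / z, -Complex.I;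
         ((conj z) ^ 2)⁻¹, -(conj z)⁻¹, 1;
         ((2 * z.im / ‖z‖ ^ 2 : ℝ) : ℂ), ((Real.pi - 2 * Complex.arg z : ℝ) : ℂ),
           ((2 * z.im : ℝ) : ℂ)] =
    ((4 * z.im / (Real.pi * ‖z‖ ^ 4) *
        (z.im + z.re * (Real.pi / 2 - Complex.arg z)) : ℝ) : ℂ) := by
  rw [show -I / z ^ 2 = -I * z⁻¹ ^ 2 by ring, show I / z = -(-I * z⁻¹) by ring,
    ← inv_pow, Matrix.det_fin_three_quadratic_rows, inv_conj_sub_inv, inv_add_inv_conj,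
    inv_mul_inv_conj, show ‖z‖ ^ 4 = (‖z‖ ^ 2) ^ 2 by ring, Complex.sq_norm]
  push_cast
  field_simp
  rw [I_sq]
  ring
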